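/- Under an elementary change of type b) or c) swapping a core symbol between positions t and t+1, i.e. f_λ(t)=∘, f_λ(t+1)=s for s ∈ {<,>} and f_μ(t)=s, f_μ(t+1)=∘, with all other positions equal, the cap diagrams of f_λ and f_μ have caps with the same left endpoints (×-positions), and the sets P(λ) and P(μ) correspond bijectively via exchanging the symbols at positions t and t+1. -/
import Mathlib


/-- Symbols of a weight diagram. -/
inductive WSym where
  | empty | lt | gt | cross
deriving DecidableEq

/-- `C` is the cap diagram of the tailless weight diagram `f`. -/
def IsCapDiagram (f : ℕ → WSym) (C : Finset (ℕ × ℕ)) : Prop :=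
  (∀ c ∈ C, c.1 < c.2 ∧ f c.1 = WSym.cross ∧ f c.2 = WSym.empty) ∧
  (∀ t, f t = WSym.cross → ∃ c ∈ C, c.1 = t) ∧
  (∀ c ∈ C, ∀ c' ∈ C, c ≠ c' → c.1 ≠ c'.1 ∧ c.2 ≠ c'.2) ∧
  (∀ c ∈ C, ∀ t, c.1 < t → t < c.2 → f t = WSym.empty → ∃ c' ∈ C, c'.2 = t) ∧
  (∀ c ∈ C, ∀ c' ∈ C, c.1 < c'.1 → c'.1 < c.2 → c'.2 < c.2)

open Classical in
/-- Move the `×` of each cap in `S` from the left end to the right end. -/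
noncomputable def moveCaps (f : ℕ → WSym) (S : Finset (ℕ × ℕ)) : ℕ → WSym := fun t =>
  if ∃ c ∈ S, c.1 = t then WSym.empty
  else if ∃ c ∈ S, c.2 = t then WSym.cross
  else f t

/-- The transposition of the adjacent positions `t` and `t + 1`. -/
def swapPt (t : ℕ) : ℕ → ℕ := fun s =>
  if s = t then t + 1 else if s = t + 1 then t else s

lemma swapPt_invol (t s : ℕ) : swapPt t (swapPt t s) = s := by
  unfold swapPt; split_ifs <;> omega

lemma swapPt_eq_of_ne {t s : ℕ} (h1 : s ≠ t) (h2 : s ≠ t + 1) : swapPt t s = s := by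
  unfold swapPt; split_ifs <;> omega

lemma swapPt_t (t : ℕ) : swapPt t t = t + 1 := by unfold swapPt; simp

lemma swapPt_t1 (t : ℕ) : swapPt t (t + 1) = t := by unfold swapPt; simp

lemma swapPt_inj (t : ℕ) {a b : ℕ} (h : swapPt t a = swapPt t b) : a = b := by
  have := congrArg (swapPt t) h
  rwa [swapPt_invol, swapPt_invol] at this

lemma prodmap_invol (t : ℕ) (c : ℕ × ℕ) :
    Prod.map (swapPt t) (swapPt t) (Prod.map (swapPt t) (swapPt t) c) = c := by
  simp [Prod.map, swapPt_invol]

/-- Key commutation lemma. -/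
lemma moveCaps_swap (f g : ℕ → WSym) (t : ℕ)
    (hgf : ∀ u, g u = f (swapPt t u)) (S : Finset (ℕ × ℕ)) :
    moveCaps g (S.image (Prod.map (swapPt t) (swapPt t))) = (moveCaps f S) ∘ swapPt t := by
  funext u
  have e1 : (∃ c ∈ S.image (Prod.map (swapPt t) (swapPt t)), c.1 = u) ↔
      (∃ c ∈ S, c.1 = swapPt t u) := by
    constructor
    · rintro ⟨c, hc, h1⟩
      rw [Finset.mem_image] at hc
      obtain ⟨d, hd, rfl⟩ := hc
      refine ⟨d, hd, ?_⟩
      have h1' : swapPt t d.1 = u := h1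
      rw [← h1', swapPt_invol]
    · rintro ⟨c, hc, h1⟩
      refine ⟨Prod.map (swapPt t) (swapPt t) c, Finset.mem_image_of_mem _ hc, ?_⟩
      simp [Prod.map, h1, swapPt_invol]
  have e2 : (∃ c ∈ S.image (Prod.map (swapPt t) (swapPt t)), c.2 = u) ↔
      (∃ c ∈ S, c.2 = swapPt t u) := by
    constructor
    · rintro ⟨c, hc, h1⟩
      rw [Finset.mem_image] at hc
      obtain ⟨d, hd, rfl⟩ := hc
      refine ⟨d, hd, ?_⟩
      have : swapPt t d.2 = u := h1
      rw [← this, swapPt_invol]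
    · rintro ⟨c, hc, h1⟩
      refine ⟨Prod.map (swapPt t) (swapPt t) c, Finset.mem_image_of_mem _ hc, ?_⟩
      simp [Prod.map, h1, swapPt_invol]
  simp only [moveCaps, Function.comp_apply]
  by_cases h1 : ∃ c ∈ S, c.1 = swapPt t u
  · rw [if_pos (e1.mpr h1), if_pos h1]
  · rw [if_neg (fun hh => h1 (e1.mp hh)), if_neg h1]
    by_cases h2 : ∃ c ∈ S, c.2 = swapPt t u
    · rw [if_pos (e2.mpr h2), if_pos h2]
    · rw [if_neg (fun hh => h2 (e2.mp hh)), if_neg h2, hgf]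

/-- **Compatibility of cap diagrams and of the sets `P(λ)` with the elementary
changes b), c).**  Suppose `g` is obtained from `f` by moving a core symbol
`x ∈ {<, >}` from position `t + 1` to the empty position `t`.  Then the image of
the cap diagram of `f` under the transposition of `t`, `t+1` is a cap diagram of
`g`; the caps of `f` and `g` have the same left endpoints (the crosses); and the
sets `P(f)` and `P(g)` correspond bijectively by exchanging the symbols at the
positions `t` and `t + 1`. -/
theorem stmt16 (f g : ℕ → WSym) (t : ℕ) (x : WSym) (hx : x = WSym.lt ∨ x = WSym.gt)
    (hf1 : f t = WSym.empty) (hf2 : f (t + 1) = x)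
    (hg1 : g t = x) (hg2 : g (t + 1) = WSym.empty)
    (hfg : ∀ s, s ≠ t → s ≠ t + 1 → g s = f s)
    (C : Finset (ℕ × ℕ)) (hC : IsCapDiagram f C) :
    IsCapDiagram g (C.image (Prod.map (swapPt t) (swapPt t))) ∧
    (∀ s, (∃ c ∈ C, c.1 = s) ↔
      ∃ c ∈ C.image (Prod.map (swapPt t) (swapPt t)), c.1 = s) ∧
    {h | ∃ S ⊆ C.image (Prod.map (swapPt t) (swapPt t)), h = moveCaps g S} =
      (fun h => h ∘ swapPt t) '' {h | ∃ S ⊆ C, h = moveCaps f S} := by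
  obtain ⟨h1, h2, h3, h4, h5⟩ := hC
  have hxc : x ≠ WSym.cross := by rcases hx with rfl | rfl <;> simp
  have hxe : x ≠ WSym.empty := by rcases hx with rfl | rfl <;> simp
  -- facts about endpoints of caps in C
  have hL1 : ∀ c ∈ C, c.1 ≠ t := fun c hc h => by
    have := (h1 c hc).2.1; rw [h, hf1] at this; exact absurd this (by simp)
  have hL2 : ∀ c ∈ C, c.1 ≠ t + 1 := fun c hc h => by
    have := (h1 c hc).2.1; rw [h, hf2] at this; exact hxc this
  have hR2 : ∀ c ∈ C, c.2 ≠ t + 1 := fun c hc h => by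
    have := (h1 c hc).2.2; rw [h, hf2] at this; exact hxe this
  have hsL : ∀ c ∈ C, swapPt t c.1 = c.1 := fun c hc =>
    swapPt_eq_of_ne (hL1 c hc) (hL2 c hc)
  have hgf : ∀ u, g u = f (swapPt t u) := by
    intro u
    by_cases h : u = t
    · subst h; rw [swapPt_t, hg1, hf2]
    · by_cases h' : u = t + 1
      · subst h'; rw [swapPt_t1, hg2, hf1]
      · rw [swapPt_eq_of_ne h h', hfg u h h']
  constructor
  · -- cap diagram
    refine ⟨?_, ?_, ?_, ?_, ?_⟩
    · rintro c hc
      rw [Finset.mem_image] at hc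
      obtain ⟨d, hd, rfl⟩ := hc
      obtain ⟨hlt, hcr, hem⟩ := h1 d hd
      have e1 : (Prod.map (swapPt t) (swapPt t) d).1 = d.1 := hsL d hd
      refine ⟨?_, ?_, ?_⟩
      · show swapPt t d.1 < swapPt t d.2
        rw [hsL d hd]
        by_cases h : d.2 = t
        · rw [h, swapPt_t]
          have : d.1 < t := lt_of_le_of_ne (Nat.lt_succ_iff.mp (h ▸ Nat.lt_succ_of_lt hlt))
            (hL1 d hd)
          omega
        · rw [swapPt_eq_of_ne h (hR2 d hd)]; exact hlt
      · show g (swapPt t d.1) = WSym.cross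
        rw [hsL d hd, hfg d.1 (hL1 d hd) (hL2 d hd)]; exact hcr
      · show g (swapPt t d.2) = WSym.empty
        by_cases h : d.2 = t
        · rw [h, swapPt_t]; exact hg2
        · rw [swapPt_eq_of_ne h (hR2 d hd),
            hfg d.2 h (hR2 d hd)]; exact hem
    · intro u hu
      have hu1 : u ≠ t := fun h => by rw [h, hg1] at hu; exact hxc hu
      have hu2 : u ≠ t + 1 := fun h => by rw [h, hg2] at hu; exact absurd hu (by simp)
      rw [hfg u hu1 hu2] at hu
      obtain ⟨c, hc, hc1⟩ := h2 u hu
      exact ⟨Prod.map (swapPt t) (swapPt t) c, Finset.mem_image_of_mem _ hc,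
        by rw [show (Prod.map (swapPt t) (swapPt t) c).1 = swapPt t c.1 from rfl,
          hsL c hc, hc1]⟩
    · rintro c hc c' hc' hne
      rw [Finset.mem_image] at hc hc'
      obtain ⟨d, hd, rfl⟩ := hc
      obtain ⟨d', hd', rfl⟩ := hc'
      have hdd : d ≠ d' := fun h => hne (by rw [h])
      obtain ⟨q1, q2⟩ := h3 d hd d' hd' hdd
      exact ⟨fun h => q1 (swapPt_inj t h), fun h => q2 (swapPt_inj t h)⟩
    · rintro c hc u hlu hur hemp
      rw [Finset.mem_image] at hc
      obtain ⟨d, hd, rfl⟩ := hc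
      obtain ⟨hlt, hcr, hem⟩ := h1 d hd
      rw [show (Prod.map (swapPt t) (swapPt t) d).1 = swapPt t d.1 from rfl,
        hsL d hd] at hlu
      have hur' : u < swapPt t d.2 := hur
      by_cases hut : u = t + 1
      · -- need a cap of C ending at t
        subst hut
        have hd2t : d.2 ≠ t := by
          intro h
          rw [h, swapPt_t] at hur'; omega
        rw [swapPt_eq_of_ne hd2t (hR2 d hd)] at hur'
        have hd1t : d.1 < t := lt_of_le_of_ne (Nat.lt_succ_iff.mp hlu) (hL1 d hd)
        obtain ⟨c', hc', hc2⟩ := h4 d hd t hd1t (by omega) hf1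
        refine ⟨Prod.map (swapPt t) (swapPt t) c', Finset.mem_image_of_mem _ hc', ?_⟩
        show swapPt t c'.2 = t + 1
        rw [hc2, swapPt_t]
      · have hut0 : u ≠ t := by
          intro h; rw [h, hg1] at hemp; exact hxe hemp
        rw [hfg u hut0 hut] at hemp
        have hud : u < d.2 := by
          by_cases h : d.2 = t
          · rw [h, swapPt_t] at hur'; omega
          · rwa [swapPt_eq_of_ne h (hR2 d hd)] at hur'
        obtain ⟨c', hc', hc2⟩ := h4 d hd u hlu hud hemp
        refine ⟨Prod.map (swapPt t) (swapPt t) c', Finset.mem_image_of_mem _ hc', ?_⟩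
        show swapPt t c'.2 = u
        rw [hc2, swapPt_eq_of_ne hut0 hut]
    · rintro c hc c' hc' hlt1 hlt2
      rw [Finset.mem_image] at hc hc'
      obtain ⟨d, hd, rfl⟩ := hc
      obtain ⟨d', hd', rfl⟩ := hc'
      simp only [Prod.map_fst, Prod.map_snd, hsL d hd, hsL d' hd'] at hlt1 hlt2 ⊢
      have hlt2' : d'.1 < d.2 := by
        by_cases h : d.2 = t
        · have : d'.1 < t + 1 := by rw [h, swapPt_t] at hlt2; exact hlt2
          exact h ▸ lt_of_le_of_ne (Nat.lt_succ_iff.mp this) (hL1 d' hd')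
        · rwa [swapPt_eq_of_ne h (hR2 d hd)] at hlt2
      have key : d'.2 < d.2 := h5 d hd d' hd' hlt1 hlt2'
      show swapPt t d'.2 < swapPt t d.2
      by_cases h : d.2 = t
      · have hd'2 : d'.2 ≠ t := by omega
        rw [h, swapPt_t, swapPt_eq_of_ne hd'2 (by omega)]
        omega
      · rw [swapPt_eq_of_ne h (hR2 d hd)]
        by_cases h' : d'.2 = t
        · rw [h', swapPt_t]
          have : t < d.2 := h' ▸ key
          have : d.2 ≠ t + 1 := hR2 d hd
          omega
        · rw [swapPt_eq_of_ne h' (hR2 d' hd')]; exact key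
  constructor
  · -- same left endpoints
    intro s
    constructor
    · rintro ⟨c, hc, rfl⟩
      exact ⟨Prod.map (swapPt t) (swapPt t) c, Finset.mem_image_of_mem _ hc, hsL c hc⟩
    · rintro ⟨c, hc, rfl⟩
      rw [Finset.mem_image] at hc
      obtain ⟨d, hd, rfl⟩ := hc
      exact ⟨d, hd, (hsL d hd).symm⟩
  · -- the P-sets
    ext h
    constructor
    · rintro ⟨S', hS', rfl⟩
      refine ⟨moveCaps f (S'.image (Prod.map (swapPt t) (swapPt t))),
        ⟨S'.image (Prod.map (swapPt t) (swapPt t)), ?_, rfl⟩, ?_⟩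
      · intro c hc
        rw [Finset.mem_image] at hc
        obtain ⟨d, hd, rfl⟩ := hc
        have := hS' hd
        rw [Finset.mem_image] at this
        obtain ⟨e, he, rfl⟩ := this
        rwa [prodmap_invol]
      · show moveCaps f (S'.image (Prod.map (swapPt t) (swapPt t))) ∘ swapPt t = moveCaps g S'
        rw [← moveCaps_swap f g t hgf, Finset.image_image,
          show (Prod.map (swapPt t) (swapPt t)) ∘ (Prod.map (swapPt t) (swapPt t)) = id from
            funext (prodmap_invol t), Finset.image_id]
    · rintro ⟨h', ⟨S, hS, rfl⟩, rfl⟩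
      refine ⟨S.image (Prod.map (swapPt t) (swapPt t)), Finset.image_subset_image hS, ?_⟩
      rw [moveCaps_swap f g t hgf]
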